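/- arXiv:2011.13339 — 5 statements merged into one kernel-verified Lean document; each statement's English description precedes it below -/
import Mathlib

section
/- For variables x_1,...,x_n, the determinant det((x_a - y_b)^{-1})_{1≤a,b≤n} (the Cauchy determinant) equals (-1)^{n(n-1)/2} Δ(x)Δ(y) / ∏_{1≤a,b≤n}(x_a - y_b), where Δ(x) = ∏_{1≤i<j≤n}(x_i - x_j) is the Vandermonde product. -/
open Finset

private lemma filter_lt_eq_Ioi {n : ℕ} (i : Fin n) :
    univ.filter (fun j => i < j) = Ioi i := by
  ext j; simp

private lemma sum_card_Ioi (n : ℕ) : ∑ i : Fin n, (Ioi i).card = n * (n - 1) / 2 := by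
  simp only [Fin.card_Ioi]
  rw [Fin.sum_univ_eq_sum_range (fun i => n - 1 - i) n,
    Finset.sum_range_reflect (fun j => j) n, Finset.sum_range_id]

private lemma prod_Ioi_sub_comm {F : Type*} [Field F] {n : ℕ} (v : Fin n → F) :
    ∏ i : Fin n, ∏ j ∈ Ioi i, (v j - v i) =
      (-1) ^ (n * (n - 1) / 2) * ∏ i : Fin n, ∏ j ∈ Ioi i, (v i - v j) := by
  calc ∏ i : Fin n, ∏ j ∈ Ioi i, (v j - v i)
      = ∏ i : Fin n, ∏ j ∈ Ioi i, ((-1) * (v i - v j)) := by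
        simp only [neg_one_mul, neg_sub]
    _ = (∏ i : Fin n, ∏ j ∈ Ioi i, (-1 : F)) *
          ∏ i : Fin n, ∏ j ∈ Ioi i, (v i - v j) := by
        rw [← prod_mul_distrib]
        exact prod_congr rfl fun i _ => prod_mul_distrib
    _ = (-1) ^ (n * (n - 1) / 2) * ∏ i : Fin n, ∏ j ∈ Ioi i, (v i - v j) := by
        congr 1
        simp only [prod_const]
        rw [Finset.prod_pow_eq_pow_sum, sum_card_Ioi]

private lemma prod_erase_split {F : Type*} [Field F] {n : ℕ} (v : Fin n → F) :
    ∏ b : Fin n, ∏ c ∈ univ.erase b, (v b - v c) =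
      (∏ i : Fin n, ∏ j ∈ Ioi i, (v i - v j)) *
        ∏ i : Fin n, ∏ j ∈ Ioi i, (v j - v i) := by
  have h1 : ∀ b : Fin n, univ.erase b = Iio b ∪ Ioi b := by
    intro b; ext c
    simp only [mem_erase, mem_union, mem_Iio, mem_Ioi, mem_univ, and_true]
    exact ne_iff_lt_or_gt
  calc ∏ b : Fin n, ∏ c ∈ univ.erase b, (v b - v c)
      = ∏ b : Fin n, ((∏ c ∈ Iio b, (v b - v c)) * ∏ c ∈ Ioi b, (v b - v c)) := by
        refine prod_congr rfl fun b _ => ?_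
        rw [h1 b, prod_union (Finset.disjoint_Ioi_Iio b).symm]
    _ = (∏ b : Fin n, ∏ c ∈ Iio b, (v b - v c)) *
          ∏ b : Fin n, ∏ c ∈ Ioi b, (v b - v c) := prod_mul_distrib
    _ = _ := by
        rw [mul_comm]
        congr 1
        exact prod_comm' (fun b c => by simp)

/-- Cauchy determinant formula:
`det((x_a - y_b)⁻¹) = (-1)^{n(n-1)/2} Δ(x) Δ(y) / ∏_{a,b} (x_a - y_b)`,
where `Δ(x) = ∏_{i<j} (x_i - x_j)`. -/
theorem cauchy_determinant {F : Type*} [Field F] (n : ℕ) (x y : Fin n → F)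
    (h : ∀ a b, x a ≠ y b) :
    Matrix.det (Matrix.of fun a b : Fin n => (x a - y b)⁻¹) =
      (-1) ^ (n * (n - 1) / 2) *
        ((∏ i : Fin n, ∏ j ∈ univ.filter (fun j => i < j), (x i - x j)) *
          (∏ i : Fin n, ∏ j ∈ univ.filter (fun j => i < j), (y i - y j))) /
        ∏ a : Fin n, ∏ b : Fin n, (x a - y b) := by
  simp only [filter_lt_eq_Ioi]
  rcases Nat.eq_zero_or_pos n with hn | hn
  · subst hn
    simp [Matrix.det_isEmpty]
  by_cases hx : Function.Injective x
  swap
  · rw [Function.not_injective_iff] at hx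
    obtain ⟨i, j, hij, hne⟩ := hx
    rw [Matrix.det_zero_of_row_eq hne (by funext b; simp [hij])]
    have hz : (∏ i : Fin n, ∏ j ∈ Ioi i, (x i - x j)) = 0 := by
      rcases hne.lt_or_gt with hlt | hlt
      · exact prod_eq_zero (mem_univ i) (prod_eq_zero (mem_Ioi.mpr hlt) (by simp [hij]))
      · exact prod_eq_zero (mem_univ j) (prod_eq_zero (mem_Ioi.mpr hlt) (by simp [hij]))
    rw [hz]
    simp
  by_cases hy : Function.Injective y
  swap
  · rw [Function.not_injective_iff] at hy
    obtain ⟨i, j, hij, hne⟩ := hy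
    rw [Matrix.det_zero_of_column_eq hne (fun a => by simp [hij])]
    have hz : (∏ i : Fin n, ∏ j ∈ Ioi i, (y i - y j)) = 0 := by
      rcases hne.lt_or_gt with hlt | hlt
      · exact prod_eq_zero (mem_univ i) (prod_eq_zero (mem_Ioi.mpr hlt) (by simp [hij]))
      · exact prod_eq_zero (mem_univ j) (prod_eq_zero (mem_Ioi.mpr hlt) (by simp [hij]))
    rw [hz]
    simp
  classical
  set p : Fin n → Polynomial F :=
    fun b => ∏ c ∈ univ.erase b, (Polynomial.X - Polynomial.C (y c)) with hp
  set Cm : Matrix (Fin n) (Fin n) F := Matrix.of fun k b => (p b).coeff k with hCmdef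
  have hdeg : ∀ b, (p b).natDegree < n := by
    intro b
    calc (p b).natDegree ≤ ∑ c ∈ univ.erase b, (Polynomial.X - Polynomial.C (y c)).natDegree :=
          Polynomial.natDegree_prod_le _ _
      _ = (univ.erase b).card := by simp [Polynomial.natDegree_X_sub_C]
      _ = n - 1 := by simp [Finset.card_erase_of_mem]
      _ < n := Nat.sub_lt hn one_pos
  have heval : ∀ (t : F) b, (p b).eval t = ∏ c ∈ univ.erase b, (t - y c) := by
    intro t b
    simp [hp, Polynomial.eval_prod]
  have hVC : ∀ (v : Fin n → F) (a b : Fin n),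
      (Matrix.vandermonde v * Cm) a b = (p b).eval (v a) := by
    intro v a b
    rw [Matrix.mul_apply, Polynomial.eval_eq_sum_range' (hdeg b)]
    simp only [Matrix.vandermonde_apply, hCmdef, Matrix.of_apply]
    rw [Fin.sum_univ_eq_sum_range (fun k => v a ^ k * (p b).coeff k) n]
    exact Finset.sum_congr rfl fun i _ => mul_comm _ _
  set d : Fin n → F := fun b => ∏ c ∈ univ.erase b, (y b - y c) with hd
  have hWC : Matrix.vandermonde y * Cm = Matrix.diagonal d := by
    ext a b
    rw [hVC y a b, heval]
    by_cases hab : a = b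
    · subst hab
      simp [hd]
    · rw [Matrix.diagonal_apply_ne _ hab]
      exact prod_eq_zero (mem_erase.mpr ⟨hab, mem_univ a⟩) (sub_self _)
  set e : Fin n → F := fun a => (∏ c : Fin n, (x a - y c))⁻¹ with he
  have hM : (Matrix.of fun a b : Fin n => (x a - y b)⁻¹) =
      Matrix.diagonal e * (Matrix.vandermonde x * Cm) := by
    ext a b
    rw [Matrix.diagonal_mul, hVC x a b, heval]
    have hprod : (∏ c : Fin n, (x a - y c)) = (x a - y b) * ∏ c ∈ univ.erase b, (x a - y c) :=
      (mul_prod_erase univ _ (mem_univ b)).symm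
    have h2 : (∏ c ∈ univ.erase b, (x a - y c)) ≠ 0 :=
      prod_ne_zero_iff.mpr fun c _ => sub_ne_zero.mpr (h a c)
    have h3 : e a = (x a - y b)⁻¹ * (∏ c ∈ univ.erase b, (x a - y c))⁻¹ := by
      simp only [he]
      rw [hprod, mul_inv]
    rw [Matrix.of_apply, h3, mul_assoc, inv_mul_cancel₀ h2, mul_one]
  have hdetW : (Matrix.vandermonde y).det ≠ 0 := Matrix.det_vandermonde_ne_zero_iff.mpr hy
  have hyv : (∏ i : Fin n, ∏ j ∈ Ioi i, (y j - y i)) ≠ 0 := by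
    rw [← Matrix.det_vandermonde]; exact hdetW
  have hWCdet : (Matrix.vandermonde y).det * Cm.det = ∏ b, d b := by
    rw [← Matrix.det_mul, hWC, Matrix.det_diagonal]
  have hCm : Cm.det = ∏ i : Fin n, ∏ j ∈ Ioi i, (y i - y j) := by
    have h5 := hWCdet
    rw [Matrix.det_vandermonde] at h5
    rw [hd] at h5
    rw [prod_erase_split y] at h5
    exact mul_left_cancel₀ hyv (h5.trans (mul_comm _ _))
  have hP : (∏ a : Fin n, ∏ c : Fin n, (x a - y c)) ≠ 0 :=
    prod_ne_zero_iff.mpr fun a _ => prod_ne_zero_iff.mpr fun c _ => sub_ne_zero.mpr (h a c)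
  have hea : (∏ a : Fin n, e a) = (∏ a : Fin n, ∏ c : Fin n, (x a - y c))⁻¹ := by
    rw [he, ← Finset.prod_inv_distrib]
  rw [hM, Matrix.det_mul, Matrix.det_diagonal, Matrix.det_mul, hCm, Matrix.det_vandermonde,
    prod_Ioi_sub_comm x, hea]
  field_simp
end

section
/- The Pfaffian of the (2n+2m)×(2n+2m) block skew-symmetric matrix [[M, V],[−V^T, 0]] vanishes whenever 2m > 2n, where M is a 2n×2n skew-symmetric matrix and V is a 2n×2m matrix. -/
/-!
Each term of the sum defining `pfaffian N A` contains the factors `A (σ (2i)) (σ (2i+1))`, one for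
each of the `N` pairs `{2i, 2i+1}`. If `A` vanishes on `S × S` for an index set `S` with more than
`N` elements, pigeonhole puts both members of some pair into `σ⁻¹ '' S`, so every term vanishes.
For the block matrix, `S` is the set of the last `2m` indices, and `2m > n + m`.
-/

open Finset Matrix

/-- The Pfaffian of a `2n × 2n` skew-symmetric matrix. -/
noncomputable def pfaffian {K : Type*} [Field K] (n : ℕ)
    (A : Matrix (Fin (2 * n)) (Fin (2 * n)) K) : K :=
  ((2 : K) ^ n * (n.factorial : K))⁻¹ *
    ∑ σ : Equiv.Perm (Fin (2 * n)),
      ((Equiv.Perm.sign σ : ℤ) : K) *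
        ∏ i : Fin n,
          A (σ ⟨2 * i.val, by have := i.isLt; omega⟩)
            (σ ⟨2 * i.val + 1, by have := i.isLt; omega⟩)

theorem Fin.exists_pair_mem_of_lt_card {N : ℕ} (T : Finset (Fin (2 * N))) (hT : N < #T) :
    ∃ t : Fin N, (⟨2 * t, by omega⟩ : Fin (2 * N)) ∈ T ∧
      (⟨2 * t + 1, by omega⟩ : Fin (2 * N)) ∈ T := by
  obtain ⟨j₁, hj₁, j₂, hj₂, hne, hdiv⟩ := exists_ne_map_eq_of_card_lt_of_maps_to
    (t := (univ : Finset (Fin N))) (f := fun j : Fin (2 * N) => (⟨j / 2, by omega⟩ : Fin N))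
    (by simpa using hT) (fun _ _ => mem_univ _)
  have hval : (j₁ : ℕ) ≠ j₂ := Fin.val_ne_of_ne hne
  simp only [Fin.mk.injEq] at hdiv
  have mem_of_half_eq (k : Fin (2 * N)) (hk : (k : ℕ) / 2 = j₁ / 2) : k ∈ T := by
    obtain h | h : k = j₁ ∨ k = j₂ := by omega
    all_goals simp_all
  exact ⟨⟨j₁ / 2, by omega⟩, mem_of_half_eq _ (by simp), mem_of_half_eq _ (by simp; omega)⟩

theorem pfaffian_eq_zero_of_forall_mem_eq_zero {K : Type*} [Field K] {N : ℕ}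
    (A : Matrix (Fin (2 * N)) (Fin (2 * N)) K) (S : Finset (Fin (2 * N))) (hS : N < #S)
    (hA : ∀ i ∈ S, ∀ j ∈ S, A i j = 0) : pfaffian N A = 0 := by
  refine mul_eq_zero_of_right _ (sum_eq_zero fun σ _ => mul_eq_zero_of_right _ ?_)
  obtain ⟨t, ht₀, ht₁⟩ := Fin.exists_pair_mem_of_lt_card (S.map σ.symm.toEmbedding) (by simpa)
  rw [mem_map_equiv, Equiv.symm_symm] at ht₀ ht₁
  exact prod_eq_zero (mem_univ t) (hA _ ht₀ _ ht₁)

/-- The Pfaffian of the `(2n+2m) × (2n+2m)` block skew-symmetric matrix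
`[[M, V], [-Vᵀ, 0]]` vanishes whenever `2m > 2n`. -/
theorem pfaffian_block_vanishes {K : Type*} [Field K]
    (n m : ℕ) (hnm : n < m)
    (M : Matrix (Fin (2 * n)) (Fin (2 * n)) K)
    (V : Matrix (Fin (2 * n)) (Fin (2 * m)) K) :
    pfaffian (n + m)
      (Matrix.reindex (finSumFinEquiv.trans (finCongr (by ring : 2 * n + 2 * m = 2 * (n + m))))
        (finSumFinEquiv.trans (finCongr (by ring : 2 * n + 2 * m = 2 * (n + m))))
        (Matrix.fromBlocks M V (-Vᵀ) 0)) = 0 := by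
  set e := finSumFinEquiv.trans (finCongr (by ring : 2 * n + 2 * m = 2 * (n + m)))
  refine pfaffian_eq_zero_of_forall_mem_eq_zero _
    (univ.map (Function.Embedding.inr.trans e.toEmbedding))
    (by rw [card_map, card_univ, Fintype.card_fin]; omega) ?_
  simp only [mem_map, mem_univ, true_and]
  rintro _ ⟨a, rfl⟩ _ ⟨b, rfl⟩
  simp only [Function.Embedding.trans_apply, Equiv.coe_toEmbedding, reindex_apply, submatrix_apply,
    Equiv.symm_apply_apply, Function.Embedding.inr_apply, fromBlocks_apply₂₂, Matrix.zero_apply]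
end

section
/- (Giambelli identity for Schur polynomials) For a partition λ with Frobenius coordinates (α_1,...,α_r | β_1,...,β_r), the Schur polynomial satisfies s_λ = det( s_{(α_i | β_j)} )_{1≤i,j≤r}, where (α|β) denotes the hook partition with arm α and leg β. -/
/-!
Write `δ = (n-1, …, 1, 0)` and `A = (x_j ^ δ_k)`, the denominator of every bialternant.
The numerator exponents `λ_k + δ_k` are `α_k + n` for `k < r`, while for `k ≥ r` they are
`δ_(k - λ_k)`, where `k - λ_k` runs increasingly through the indices outside `{β_i}`. So the
numerator is, up to a column permutation that decreases on the first `r` places and increases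
after them (hence has sign `(-1)^(∑ β)`), the matrix `A` with its columns `β_i` replaced by
`u_i = x^(α_i + n)`; a hook `(a|b)` is the case `r = 1`. Sylvester's identity
`det A ^ (r-1) · det (A with columns β_i ↦ u_i) = det (det (A with column β_j ↦ u_i))_{ij}`
then turns `s_λ · det A` into `det (s_(α_i|β_j))_{ij} · det A`.
-/
open Finset

/-- The Schur polynomial in `n` variables, via Jacobi's bialternant formula:
`s_μ(x) = det(x_j^{μ_k - k + n}) / det(x_j^{n - k})` (indices `0`-based). -/
noncomputable def schurPoly {F : Type*} [Field F] (n : ℕ) (μ : Fin n → ℕ)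
    (x : Fin n → F) : F :=
  Matrix.det (Matrix.of fun j k : Fin n => x j ^ (μ k + (n - 1 - k.val))) /
    Matrix.det (Matrix.of fun j k : Fin n => x j ^ (n - 1 - k.val))

/-- The hook partition `(a|b) = (a+1, 1^b)` with at most `n` parts. -/
def hookPartition (n a b : ℕ) : Fin n → ℕ :=
  fun k => if k.val = 0 then a + 1 else if k.val ≤ b then 1 else 0

open Equiv Function

namespace Equiv.Perm

variable {n : ℕ}

theorem card_filter_apply_lt (σ : Perm (Fin n)) (v : Fin n) : #{k | σ k < v} = v := by
  rw [← Fin.card_Iio v, ← card_map σ.toEmbedding]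
  congr 1
  ext y
  simp

theorem apply_lt_apply_iff_of_strictMonoOn_Ioi (σ : Perm (Fin n)) {p : Fin n}
    (hmono : StrictMonoOn σ (Set.Ioi p)) (hle : ∀ k ≤ p, σ p ≤ σ k) :
    (p : ℕ) + σ p < n ∧ ∀ k, p < k → (σ k < σ p ↔ (k : ℕ) ≤ p + σ p) := by
  have hcard := σ.card_filter_apply_lt (σ p)
  have hsub : ({k | σ k < σ p} : Finset (Fin n)) ⊆ Ioi p := fun k hk =>
    mem_Ioi.2 (lt_of_not_ge fun h => (hle k h).not_gt (mem_filter.1 hk).2)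
  refine ⟨?_, fun k hpk => ⟨fun hk => ?_, fun hk => ?_⟩⟩
  · have := card_le_card hsub
    rw [Fin.card_Ioi] at this
    omega
  · have : Ioc p k ⊆ ({k | σ k < σ p} : Finset (Fin n)) := fun j hj => by
      obtain ⟨hpj, hjk⟩ := mem_Ioc.1 hj
      exact mem_filter.2 ⟨mem_univ j, (hmono.monotoneOn hpj hpk hjk).trans_lt hk⟩
    have := card_le_card this
    rw [Fin.card_Ioc] at this
    omega
  · by_contra hkp
    have : ({k | σ k < σ p} : Finset (Fin n)) ⊆ Ioo p k := fun j hj => by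
      have hpj := mem_Ioi.1 (hsub hj)
      refine mem_Ioo.2 ⟨hpj, lt_of_not_ge fun hkj => hkp ?_⟩
      exact (hmono.monotoneOn hpk hpj hkj).trans_lt (mem_filter.1 hj).2
    have := card_le_card this
    rw [Fin.card_Ioo] at this
    omega

/- When `σ p` is minimal among `σ 0, …, σ p`, the `σ p` smaller values all sit just after `p`,
so the cycle `(p p+1 … p+σ p)` slides the entry `σ p` into its sorted place. -/
theorem strictMonoOn_Ici_mul_cycleIcc (σ : Perm (Fin n)) {p q : Fin n} (hq : (q : ℕ) = p + σ p)
    (hmono : StrictMonoOn σ (Set.Ioi p)) (hle : ∀ k ≤ p, σ p ≤ σ k) :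
    StrictMonoOn (σ * Fin.cycleIcc p q) (Set.Ici p) := by
  have : NeZero n := ⟨p.pos.ne'⟩
  obtain ⟨-, hlt⟩ := σ.apply_lt_apply_iff_of_strictMonoOn_Ioi hmono hle
  have hpq : p ≤ q := Fin.le_def.2 (hq ▸ Nat.le_add_right _ _)
  set c := Fin.cycleIcc p q
  have hc_mid : ∀ k, p ≤ k → k < q → (c k : ℕ) = k + 1 := fun k hpk hkq => by
    rw [Fin.cycleIcc_of_ge_of_lt hpk hkq, Fin.val_add_one_of_lt' ?_]
    exact Nat.lt_of_lt_of_le (Nat.succ_lt_succ (Fin.lt_def.1 hkq)) q.isLt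
  have hc_q : c q = p := Fin.cycleIcc_of_last hpq
  have hc_gt : ∀ k, q < k → c k = k := fun k hk => Fin.cycleIcc_of_gt hk
  have htail : ∀ {k k' : Fin n}, (p : ℕ) < k → (k : ℕ) < k' → σ k < σ k' :=
    fun hk hkk' => hmono (Fin.lt_def.2 hk) (Fin.lt_def.2 (hk.trans hkk')) hkk'
  intro a ha b hb hab
  simp only [Set.mem_Ici, Fin.le_def] at ha hb
  simp only [Fin.lt_def] at hab hlt
  simp only [Perm.mul_apply]
  rcases lt_trichotomy b q with hbq | rfl | hqb
  · have hca := hc_mid a (Fin.le_def.2 ha) (hab.trans hbq)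
    have hcb := hc_mid b (Fin.le_def.2 hb) hbq
    exact htail (by omega) (by omega)
  · have hca := hc_mid a (Fin.le_def.2 ha) hab
    rw [hc_q]
    exact (hlt (c a) (by omega)).2 (by omega)
  · rw [hc_gt b hqb]
    rw [Fin.lt_def] at hqb
    rcases lt_trichotomy a q with haq | rfl | hqa
    · have hca := hc_mid a (Fin.le_def.2 ha) haq
      exact htail (by omega) (by omega)
    · rw [hc_q]
      refine lt_of_le_of_ne (not_lt.1 fun h => ?_) (σ.injective.ne (Fin.ne_of_lt ?_))
      · have := (hlt b (by omega)).1 h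
        omega
      · exact Fin.lt_def.2 (by omega)
    · rw [hc_gt a hqa]
      exact htail (by rw [Fin.lt_def] at hqa; omega) hab

theorem sign_eq_neg_one_pow_sum_of_strictAntiOn_of_strictMonoOn {r : ℕ} (hr : r ≤ n)
    (σ : Perm (Fin n)) (hanti : StrictAntiOn σ {k | k.val < r})
    (hmono : StrictMonoOn σ {k | r ≤ k.val}) :
    sign σ = (-1) ^ ∑ i : Fin r, (σ (Fin.castLE hr i) : ℕ) := by
  induction r generalizing σ with
  | zero =>
    have : σ = 1 := Equiv.ext (congrFun (StrictMono.eq_id fun a b hab =>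
      hmono (Nat.zero_le _) (Nat.zero_le _) hab))
    simp [this]
  | succ r ih =>
    set p : Fin n := ⟨r, hr⟩
    have hle : ∀ k ≤ p, σ p ≤ σ k := fun k hk => hk.eq_or_lt.elim (fun h => h ▸ le_rfl)
      fun h => (hanti (Nat.lt_succ_of_le (Fin.le_def.1 hk)) (Nat.lt_succ_self r) h).le
    have hmono_p : StrictMonoOn σ (Set.Ioi p) := hmono.mono fun _ hk => hk
    obtain ⟨hpq, -⟩ := σ.apply_lt_apply_iff_of_strictMonoOn_Ioi hmono_p hle
    set c := Fin.cycleIcc p ⟨p + σ p, hpq⟩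
    have hc : ∀ k, k < p → c k = k := fun k hk => Fin.cycleIcc_of_lt hk
    have hsign : sign σ = sign (σ * c) * (-1) ^ (σ p : ℕ) := by
      rw [sign_mul, Fin.sign_cycleIcc_of_le (Fin.le_def.2 (Nat.le_add_right _ _)),
        Nat.add_sub_cancel_left, mul_assoc, ← mul_pow, Int.units_mul_self, one_pow, mul_one]
    have hanti' : StrictAntiOn (σ * c) {k | k.val < r} := fun a ha b hb hab => by
      rw [Perm.mul_apply, Perm.mul_apply, hc a ha, hc b hb]
      exact hanti (Nat.lt_succ_of_lt ha) (Nat.lt_succ_of_lt hb) hab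
    have hmono' : StrictMonoOn (σ * c) {k | r ≤ k.val} :=
      (σ.strictMonoOn_Ici_mul_cycleIcc rfl hmono_p hle).mono fun _ hk => hk
    rw [hsign, ih (Nat.le_of_succ_le hr) (σ * c) hanti' hmono', ← pow_add, Fin.sum_univ_castSucc]
    congr 2
    exact sum_congr rfl fun i _ => by rw [Perm.mul_apply, hc _ i.isLt]; rfl

end Equiv.Perm

namespace Matrix

variable {m n ι R : Type*}

noncomputable def replaceCols (A : Matrix m n R) (p : ι → n) (u : ι → m → R) :
    Matrix m n R :=
  of fun j k => extend p (fun i => u i j) (A j) k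

section

variable (A : Matrix m n R) {p : ι → n} (u : ι → m → R)

@[simp]
theorem replaceCols_apply_self (hp : Injective p) (j : m) (i : ι) :
    replaceCols A p u j (p i) = u i j :=
  hp.extend_apply (fun i => u i j) (A j) i

theorem replaceCols_apply_of_notMem {k : n} (hk : k ∉ Set.range p) (j : m) :
    replaceCols A p u j k = A j k :=
  extend_apply' (fun i => u i j) (A j) k fun ⟨i, hi⟩ => hk ⟨i, hi⟩

end

theorem replaceCols_eq_updateCol [DecidableEq n] [Unique ι]
    (A : Matrix m n R) (p : ι → n) (u : ι → m → R) :
    A.replaceCols p u = A.updateCol (p default) (u default) := by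
  ext j k
  by_cases hk : k = p default
  · subst hk
    simp [replaceCols_apply_self _ _ (injective_of_subsingleton p)]
  · have : k ∉ Set.range p := fun ⟨i, hi⟩ => hk (by rw [← hi, Unique.eq_default i])
    rw [replaceCols_apply_of_notMem _ _ this, updateCol_ne hk]

theorem mul_replaceCols [Fintype n] [NonUnitalNonAssocSemiring R] {p : ι → n} (hp : Injective p)
    (A : Matrix m n R) (B : Matrix n n R) (w : ι → n → R) :
    A * replaceCols B p w = replaceCols (A * B) p fun i => A *ᵥ w i := by
  ext j k
  by_cases hk : k ∈ Set.range p
  · obtain ⟨i, rfl⟩ := hk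
    simp [hp, mul_apply, mulVec, dotProduct]
  · simp [replaceCols_apply_of_notMem _ _ hk, mul_apply]

theorem det_replaceCols_one [Fintype n] [DecidableEq n] [Fintype ι] [DecidableEq ι] [CommRing R]
    {p : ι → n} (hp : Injective p) (w : ι → n → R) :
    (replaceCols 1 p w).det = (of fun i j => w j (p i)).det := by
  classical
  let e : ι ⊕ ↥(Set.range p)ᶜ ≃ n :=
    (Equiv.sumCongr (Equiv.ofInjective p hp) (Equiv.refl _)).trans (Equiv.Set.sumCompl _)
  rw [← det_submatrix_equiv_self e, show (replaceCols 1 p w).submatrix e e =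
    fromBlocks (of fun i j => w j (p i)) 0 (of fun (c : ↥(Set.range p)ᶜ) j => w j c) 1 from ?_,
    det_fromBlocks_zero₁₂, det_one, mul_one]
  ext (i | c) (j | c')
  all_goals simp only [e, submatrix_apply, trans_apply, sumCongr_apply, Sum.map_inl, Sum.map_inr,
    Set.sumCompl_apply_inl, Set.sumCompl_apply_inr, ofInjective_apply, refl_apply]
  · simp [hp]
  · simp only [replaceCols_apply_of_notMem _ _ c'.2, one_apply, fromBlocks_apply₁₂, zero_apply,
      ite_eq_right_iff]
    exact fun h => absurd ⟨i, h⟩ c'.2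
  · simp [hp]
  · simp [replaceCols_apply_of_notMem _ _ c'.2, one_apply, Subtype.ext_iff]

/-- Sylvester's determinant identity. -/
theorem det_mul_det_det_updateCol [Fintype n] [DecidableEq n] [Fintype ι] [DecidableEq ι]
    [CommRing R] {A : Matrix n n R} (hA : IsUnit A.det) {p : ι → n} (hp : Injective p)
    (u : ι → n → R) :
    A.det * (of fun i j => (A.updateCol (p j) (u i)).det).det =
      A.det ^ Fintype.card ι * (replaceCols A p u).det := by
  set w : ι → n → R := fun i => A⁻¹ *ᵥ u i
  have hminor :
      (of fun i j => (A.updateCol (p j) (u i)).det) = A.det • (of fun i j => w j (p i))ᵀ := by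
    ext i j
    simp [w, ← cramer_apply, ← det_smul_inv_mulVec_eq_cramer _ _ hA]
  have hfactor : replaceCols A p u = A * replaceCols 1 p w := by
    simp [w, mul_replaceCols hp, mulVec_mulVec, mul_nonsing_inv _ hA]
  rw [hminor, hfactor, det_smul, det_transpose, det_mul, det_replaceCols_one hp]
  ring

end Matrix

section Alternant

variable {R : Type*} [CommRing R] {n : ℕ}

def alternant (x : Fin n → R) (e : Fin n → ℕ) : Matrix (Fin n) (Fin n) R :=
  Matrix.of fun j k => x j ^ e k

theorem det_alternant_comp_perm (x : Fin n → R) (e : Fin n → ℕ) (σ : Perm (Fin n)) :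
    (alternant x (e ∘ σ)).det = Perm.sign σ * (alternant x e).det :=
  Matrix.det_permute' σ (alternant x e)

theorem replaceCols_alternant {r : ℕ} (x : Fin n → R) (e : Fin n → ℕ) {p : Fin r → Fin n}
    (a : Fin r → ℕ) :
    (alternant x e).replaceCols p (fun i j => x j ^ a i) = alternant x (extend p a e) := by
  ext j k
  exact (apply_extend (x j ^ ·) p e k).symm

theorem det_alternant_staircase_ne_zero [IsDomain R] {x : Fin n → R} (hx : Injective x) :
    (alternant x fun k => n - 1 - k).det ≠ 0 := by
  have : (alternant x fun k => n - 1 - k) = alternant x (Fin.val ∘ Fin.revPerm) := by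
    congr 1
    ext k
    simp only [comp_apply, Fin.revPerm_apply, Fin.val_rev]
    omega
  rw [this, det_alternant_comp_perm]
  refine mul_ne_zero ?_ (Matrix.det_vandermonde_ne_zero_iff.2 hx)
  rcases Int.units_eq_one_or (Perm.sign (Fin.revPerm : Perm (Fin n))) with h | h <;> simp [h]

end Alternant

theorem Antitone.le_apply_iff_lt_card {α : Type*} [LinearOrder α] {n : ℕ} {l : Fin n → α}
    (hl : Antitone l) (m : α) (a : Fin n) : m ≤ l a ↔ (a : ℕ) < #{b | m ≤ l b} := by
  constructor
  · intro ha
    have := card_le_card fun b hb => mem_filter.2 ⟨mem_univ b, ha.trans (hl (mem_Iic.1 hb))⟩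
    rw [Fin.card_Iic] at this
    omega
  · intro ha
    by_contra hma
    have : #{b | m ≤ l b} ≤ #(Iio a) := card_le_card fun b hb => mem_Iio.2 <|
      lt_of_not_ge fun hab => hma ((mem_filter.1 hb).2.trans (hl hab))
    rw [Fin.card_Iio] at this
    omega

section Frobenius

variable {n r : ℕ} {l : Fin n → ℕ} {α β : Fin r → ℕ}

theorem frobenius_leg_add_lt
    (hβ : ∀ i : Fin r, #{a : Fin n | i.val + 1 ≤ l a} = β i + i.val + 1) (i : Fin r) :
    β i + i < n := by
  have := (card_filter_le univ fun a : Fin n => i.val + 1 ≤ l a).trans_eq (card_fin n)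
  rw [hβ] at this
  omega

theorem frobenius_leg_strictAnti
    (hβ : ∀ i : Fin r, #{a : Fin n | i.val + 1 ≤ l a} = β i + i.val + 1) :
    StrictAnti β := fun i i' hii' => by
  have hii'' : i.val < i'.val := hii'
  have : #{a : Fin n | i'.val + 1 ≤ l a} ≤ #{a : Fin n | i.val + 1 ≤ l a} :=
    card_le_card (monotone_filter_right univ fun a h => by omega)
  rw [hβ, hβ] at this
  omega

theorem frobenius_leg_ne_sub (hl : Antitone l)
    (hβ : ∀ i : Fin r, #{a : Fin n | i.val + 1 ≤ l a} = β i + i.val + 1)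
    (hrank : ∀ i : Fin n, r ≤ i.val → l i ≤ i.val) (i : Fin r) {k : Fin n}
    (hk : r ≤ k.val) : β i ≠ k - l k := by
  intro h
  have := hl.le_apply_iff_lt_card (i.val + 1) k
  rw [hβ] at this
  have := hrank k hk
  have := i.isLt
  omega

theorem exists_perm_frobenius (hr : r ≤ n) (hl : Antitone l)
    (hβ : ∀ i : Fin r, #{a : Fin n | i.val + 1 ≤ l a} = β i + i.val + 1)
    (hrank : ∀ i : Fin n, r ≤ i.val → l i ≤ i.val) :
    ∃ τ : Perm (Fin n), Perm.sign τ = (-1) ^ ∑ i, β i ∧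
      (∀ i, (τ (Fin.castLE hr i) : ℕ) = β i) ∧ ∀ k : Fin n, r ≤ k.val → (τ k : ℕ) = k - l k := by
  have hβanti := frobenius_leg_strictAnti hβ
  set t : Fin n → Fin n := fun k => if h : k.val < r then
    ⟨β ⟨k, h⟩, by have := frobenius_leg_add_lt hβ ⟨k, h⟩; omega⟩ else ⟨k - l k, by omega⟩
  have ht_block : ∀ k (hk : k.val < r), (t k : ℕ) = β ⟨k, hk⟩ := fun k hk => by simp [t, hk]
  have ht_tail : ∀ k, r ≤ k.val → (t k : ℕ) = k - l k := fun k hk => by simp [t, hk.not_gt]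
  have ht_anti : StrictAntiOn t {k | k.val < r} := fun a ha b hb hab => by
    rw [Fin.lt_def, ht_block a ha, ht_block b hb]
    exact hβanti hab
  have ht_mono : StrictMonoOn t {k | r ≤ k.val} := fun a ha b hb hab => by
    have := hrank a ha
    have := hl hab.le
    rw [Fin.lt_def, ht_tail a ha, ht_tail b hb]
    rw [Fin.lt_def] at hab
    omega
  have ht_ne : ∀ a b : Fin n, (ha : a.val < r) → r ≤ b.val → t a ≠ t b := fun a b ha hb h =>
    frobenius_leg_ne_sub hl hβ hrank ⟨a, ha⟩ hb (by rw [← ht_block a ha, h, ht_tail b hb])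
  have ht_inj : Injective t := fun a b hab => by
    rcases lt_or_ge a.val r with ha | ha <;> rcases lt_or_ge b.val r with hb | hb
    · exact ht_anti.injOn ha hb hab
    · exact absurd hab (ht_ne a b ha hb)
    · exact absurd hab.symm (ht_ne b a hb ha)
    · exact ht_mono.injOn ha hb hab
  refine ⟨Equiv.ofBijective t (Finite.injective_iff_bijective.1 ht_inj), ?_,
    fun i => ht_block _ i.isLt, ht_tail⟩
  rw [Perm.sign_eq_neg_one_pow_sum_of_strictAntiOn_of_strictMonoOn hr _ ht_anti ht_mono]
  exact congrArg _ (sum_congr rfl fun i _ => ht_block _ i.isLt)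

theorem exists_perm_add_staircase_eq_extend (hr : r ≤ n) (hl : Antitone l)
    (hα : ∀ i : Fin r, l (Fin.castLE hr i) = α i + i.val + 1)
    (hβ : ∀ i : Fin r, #{a : Fin n | i.val + 1 ≤ l a} = β i + i.val + 1)
    (hrank : ∀ i : Fin n, r ≤ i.val → l i ≤ i.val) {p : Fin r → Fin n}
    (hp : ∀ i, (p i : ℕ) = β i) :
    ∃ τ : Perm (Fin n), Perm.sign τ = (-1) ^ ∑ i, β i ∧
      (fun k => l k + (n - 1 - k)) = extend p (fun i => α i + n) (fun k => n - 1 - k) ∘ τ := by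
  obtain ⟨τ, hsign, hblock, htail⟩ := exists_perm_frobenius hr hl hβ hrank
  have hp_inj : Injective p := fun i i' h =>
    (frobenius_leg_strictAnti hβ).injective (by rw [← hp, ← hp, h])
  refine ⟨τ, hsign, funext fun k => ?_⟩
  rcases lt_or_ge k.val r with hk | hk
  · have hτk : τ k = p ⟨k, hk⟩ := Fin.ext ((hblock ⟨k, hk⟩).trans (hp _).symm)
    have := hα ⟨k, hk⟩
    rw [comp_apply, hτk, hp_inj.extend_apply]
    simp only [Fin.castLE_mk, Fin.eta] at this
    omega
  · have hτk : ¬∃ i, p i = τ k := fun ⟨i, hi⟩ =>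
      frobenius_leg_ne_sub hl hβ hrank i hk (by rw [← hp, hi, htail k hk])
    have := hrank k hk
    rw [comp_apply, extend_apply' _ _ _ hτk, htail k hk]
    omega

end Frobenius

theorem hookPartition_antitone (n a b : ℕ) : Antitone (hookPartition n a b) := by
  intro k k' hkk'
  rw [Fin.le_def] at hkk'
  unfold hookPartition
  split_ifs <;> omega

theorem card_one_le_hookPartition {n : ℕ} (a : ℕ) {b : ℕ} (hb : b < n) :
    #{k : Fin n | 1 ≤ hookPartition n a b k} = b + 1 := by
  rw [← Fin.card_Iic ⟨b, hb⟩]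
  congr 1
  ext k
  rw [mem_filter]
  simp only [mem_univ, true_and, mem_Iic, Fin.le_def, hookPartition]
  split_ifs <;> omega

theorem det_alternant_hookPartition {R : Type*} [CommRing R] {n : ℕ} (x : Fin n → R) (a : ℕ)
    {b : ℕ} (hb : b < n) :
    (alternant x fun k => hookPartition n a b k + (n - 1 - k)).det =
      (-1) ^ b *
        ((alternant x fun k => n - 1 - k).updateCol ⟨b, hb⟩ fun j => x j ^ (a + n)).det := by
  obtain ⟨τ, hsign, hexp⟩ := exists_perm_add_staircase_eq_extend (r := 1) (α := fun _ => a)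
    (β := fun _ => b) (by omega) (hookPartition_antitone n a b) (fun _ => by simp [hookPartition])
    (fun i => by simpa [Subsingleton.elim i 0] using card_one_le_hookPartition a hb)
    (fun k hk => by unfold hookPartition; split_ifs <;> omega) (p := fun _ => ⟨b, hb⟩)
    fun _ => rfl
  rw [hexp, det_alternant_comp_perm, hsign, ← replaceCols_alternant,
    Matrix.replaceCols_eq_updateCol]
  simp

/-- Giambelli identity: for a partition `λ` with Frobenius coordinates
`(α_1, …, α_r | β_1, …, β_r)` (so `α_i = λ_i - i`, `β_i = λ'_i - i` in 1-based
indexing, `r` the Durfee rank), the Schur polynomial satisfies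
`s_λ = det(s_{(α_i|β_j)})_{1 ≤ i,j ≤ r}`. -/
theorem giambelli_identity {F : Type*} [Field F] (n r : ℕ) (hr : r ≤ n)
    (l : Fin n → ℕ) (hl : Antitone l) (x : Fin n → F) (hx : Function.Injective x)
    (α β : Fin r → ℕ)
    (hα : ∀ i : Fin r, l (Fin.castLE hr i) = α i + i.val + 1)
    (hβ : ∀ i : Fin r,
      (univ.filter (fun a : Fin n => i.val + 1 ≤ l a)).card = β i + i.val + 1)
    (hrank : ∀ i : Fin n, r ≤ i.val → l i ≤ i.val) :
    schurPoly n l x =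
      Matrix.det (Matrix.of fun i j : Fin r =>
        schurPoly n (hookPartition n (α i) (β j)) x) := by
  set A := alternant x fun k => n - 1 - k
  have hA : A.det ≠ 0 := det_alternant_staircase_ne_zero hx
  set p : Fin r → Fin n := fun i => ⟨β i, by have := frobenius_leg_add_lt hβ i; omega⟩
  have hp : Injective p := fun i j h =>
    (frobenius_leg_strictAnti hβ).injective (congrArg Fin.val h)
  set u : Fin r → Fin n → F := fun i j => x j ^ (α i + n)
  have hschur : schurPoly n l x = (-1) ^ (∑ i, β i) * (A.replaceCols p u).det / A.det := by
    obtain ⟨τ, hsign, hexp⟩ := exists_perm_add_staircase_eq_extend hr hl hα hβ hrank (p := p)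
      fun _ => rfl
    show (alternant x _).det / A.det = _
    rw [hexp, det_alternant_comp_perm, hsign, replaceCols_alternant]
    push_cast
    rfl
  have hhook : ∀ i j, schurPoly n (hookPartition n (α i) (β j)) x =
      (-1) ^ β j / A.det * (A.updateCol (p j) (u i)).det := fun i j => by
    show (alternant x _).det / A.det = _
    rw [det_alternant_hookPartition x (α i) (p j).isLt]
    ring
  have hsylvester := Matrix.det_mul_det_det_updateCol hA.isUnit hp u
  have hrow := Matrix.det_mul_row (fun j => (-1) ^ β j / A.det)
    (Matrix.of fun i j => (A.updateCol (p j) (u i)).det)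
  simp only [Matrix.of_apply] at hrow
  simp_rw [hhook, hrow, prod_div_distrib, prod_pow_eq_pow_sum, prod_const, card_univ,
    Fintype.card_fin, hschur]
  rw [Fintype.card_fin] at hsylvester
  field_simp
  linear_combination -hsylvester
end

section
/- With r_j = −j(z+j) and p = (1,0,0,...), the monic polynomial p_j(x) = x^j + Σ_{k=1}^{j} r_j r_{j−1} ⋯ r_{j−k+1} · (1/k!) · x^{j−k} equals (−1)^j j! L_j^{(z)}(x), where L_j^{(z)} is the associated Laguerre polynomial; equivalently, p_j(x) = Σ_{k=0}^{j} (−1)^{j−k} binom(z+j, z+k) binom(j, k) ⋅ (j!/k!) ⋅ x^k. -/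
/-!
Each coefficient of `p_j` factors as
`r_j ⋯ r_{j-k+1} = (-1)^k · j(j-1)⋯(j-k+1) · (j+z)(j+z-1)⋯(j+z-k+1)`.
The first product is `j!/(j-k)!` and the second, divided by `k!`, is `binom(j+z, k)`, which is
exactly the coefficient of `x^(j-k)` in `(-1)^j j! L_j^{(z)}(x)` once the summation index of
the Laguerre sum is reflected, `k ↦ j - k`.
-/

open Finset
open scoped Nat

theorem prod_range_neg_mul_add_natSub {R : Type*} [CommRing R] (z : R) {j k : ℕ} (hk : k ≤ j) :
    ∏ m ∈ range k, (-((j - m : ℕ) : R) * (z + ((j - m : ℕ) : R))) =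
      (-1) ^ k * (j.descFactorial k : R) * ∏ i ∈ range k, ((j : R) + z - i) := by
  have factor : ∀ m ∈ range k,
      -((j - m : ℕ) : R) * (z + ((j - m : ℕ) : R)) =
        -1 * (((j - m : ℕ) : R) * ((j : R) + z - m)) := by
    intro m hm
    rw [Nat.cast_sub (by have := mem_range.mp hm; omega)]
    ring
  rw [prod_congr rfl factor, prod_mul_distrib, prod_mul_distrib, prod_const, card_range,
    Nat.descFactorial_eq_prod_range, Nat.cast_prod, mul_assoc]

theorem sum_range_succ_eq_add_sum_Icc {M : Type*} [AddCommMonoid M] (f : ℕ → M) (j : ℕ) :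
    ∑ k ∈ range (j + 1), f k = f 0 + ∑ k ∈ Icc 1 j, f k := by
  rw [sum_range_eq_add_Ico f (by omega : 0 < j + 1), Ico_add_one_right_eq_Icc]

theorem monic_term_eq_laguerre_term {F : Type*} [Field F] [CharZero F] (z x : F) {j k : ℕ}
    (hk : k ≤ j) :
    (∏ m ∈ range k, (-((j - m : ℕ) : F) * (z + ((j - m : ℕ) : F)))) * (1 / (k ! : F)) *
        x ^ (j - k) =
      (-1) ^ j * (j ! : F) *
        ((-1) ^ (j - k) * ((∏ i ∈ range k, ((j : F) + z - i)) / (k ! : F)) * x ^ (j - k) /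
          ((j - k)! : F)) := by
  have sign : ((-1 : F)) ^ j * (-1) ^ (j - k) = (-1) ^ k := by
    rw [← pow_add, show j + (j - k) = 2 * (j - k) + k by omega, pow_add, pow_mul]
    norm_num
  have hk0 : (k ! : F) ≠ 0 := Nat.cast_ne_zero.mpr k.factorial_ne_zero
  have hjk0 : ((j - k)! : F) ≠ 0 := Nat.cast_ne_zero.mpr (j - k).factorial_ne_zero
  rw [prod_range_neg_mul_add_natSub z hk, ← Nat.factorial_mul_descFactorial hk, Nat.cast_mul]
  field_simp
  linear_combination (-((j.descFactorial k : F) *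
    (∏ i ∈ range k, ((j : F) + z - i)) * x ^ (j - k))) * sign

/-- With `r_j = -j(z+j)` and `p = (1, 0, 0, …)` (so `s_{(k)}(p) = 1/k!`), the monic
polynomial `p_j(x) = x^j + Σ_{k=1}^j r_j r_{j-1} ⋯ r_{j-k+1} (1/k!) x^{j-k}` equals
`(-1)^j j! L_j^{(z)}(x)` where `L_j^{(z)}` is the associated Laguerre polynomial
`L_j^{(z)}(x) = Σ_{k=0}^j (-1)^k binom(j+z, j-k) x^k / k!` (with the generalized
binomial coefficient `binom(j+z, m) = (∏_{i=0}^{m-1} (j+z-i)) / m!`). -/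
theorem laguerre_case {F : Type*} [Field F] [CharZero F] (z : F) (j : ℕ) (x : F) :
    x ^ j +
      ∑ k ∈ Finset.Icc 1 j,
        (∏ m ∈ Finset.range k,
            (-(((j - m : ℕ) : F)) * (z + ((j - m : ℕ) : F)))) *
          (1 / (Nat.factorial k : F)) * x ^ (j - k) =
    (-1) ^ j * (Nat.factorial j : F) *
      ∑ k ∈ Finset.range (j + 1),
        (-1) ^ k *
          ((∏ i ∈ Finset.range (j - k), ((j : F) + z - (i : F))) /
            (Nat.factorial (j - k) : F)) * x ^ k / (Nat.factorial k : F) := by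
  set term : ℕ → F := fun k ↦
    (∏ m ∈ range k, (-((j - m : ℕ) : F) * (z + ((j - m : ℕ) : F)))) *
      (1 / (k ! : F)) * x ^ (j - k) with term_def
  have term_zero : term 0 = x ^ j := by simp [term_def]
  calc x ^ j + ∑ k ∈ Icc 1 j, term k
      = ∑ k ∈ range (j + 1), term k := by rw [sum_range_succ_eq_add_sum_Icc, term_zero]
    _ = ∑ k ∈ range (j + 1), term (j - k) := by
      rw [← sum_range_reflect, Nat.add_sub_cancel]
    _ = _ := by
      rw [mul_sum]
      refine sum_congr rfl fun k hk ↦ ?_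
      have hk : k ≤ j := Nat.lt_succ_iff.mp (mem_range.mp hk)
      simp only [term_def]
      rw [monic_term_eq_laguerre_term z x (j.sub_le k), Nat.sub_sub_self hk]
end

section
/- Let P be the exponential of a strictly upper triangular ℤ×ℤ matrix Ã with entries Ã_{jk} = p_{k−j} r_{j+1}⋯r_k for k > j (and 0 otherwise), where p_m and r_j are given scalars. Then the entries of P are P_{jk} = h_{k−j}(specialized) · r_{j+1}⋯r_k for k ≥ j, where h_m are the complete homogeneous symmetric functions of the sequence p; in particular for j ≥ 0, the polynomial p_j(x) = Σ_{k=0}^j P_{kj} x^k equals x^j + Σ_{k=1}^{j} r_j⋯r_{j−k+1} s_{(k)}(p) x^{j−k}, where s_{(k)}(p) is the Schur function of the one-row partition (k) expressed in the power sums p. -/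
open Finset

/-- The strictly upper triangular `ℤ × ℤ` matrix
`Ã_{jk} = p_{k-j} r_{j+1} ⋯ r_k` for `k > j`, `0` otherwise. -/
noncomputable def Atilde {F : Type*} [Field F] (p : ℕ → F) (r : ℤ → F) (j k : ℤ) : F :=
  if j < k then p (k - j).toNat * ∏ t ∈ Finset.Ioc j k, r t else 0

/-- Entrywise powers of `Ã` (each entry is a finite sum since `Ã` is strictly upper
triangular). -/
noncomputable def AtildePow {F : Type*} [Field F] (p : ℕ → F) (r : ℤ → F) :
    ℕ → ℤ → ℤ → F
  | 0, j, k => if j = k then 1 else 0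
  | (m + 1), j, k => ∑ i ∈ Finset.Icc j k, Atilde p r j i * AtildePow p r m i k

/-- The exponential `P = exp(Ã)`, defined entrywise by the (finite in each entry)
series `P_{jk} = Σ_m (Ã^m)_{jk} / m!`. -/
noncomputable def Pexp {F : Type*} [Field F] (p : ℕ → F) (r : ℤ → F) (j k : ℤ) : F :=
  ∑ m ∈ Finset.range ((k - j).toNat + 1), ((Nat.factorial m : F))⁻¹ * AtildePow p r m j k

/-- Powers of the formal series `Σ_{m ≥ 1} p_m t^m`: the coefficient of `t^m` in its
`l`-th power. -/
noncomputable def Ppow {F : Type*} [Field F] (p : ℕ → F) : ℕ → ℕ → F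
  | 0, m => if m = 0 then 1 else 0
  | (l + 1), m => ∑ i ∈ Finset.range (m + 1), (if 0 < i then p i else 0) * Ppow p l (m - i)

/-- The complete homogeneous symmetric functions `h_m = s_{(m)}` of the sequence `p`,
determined by `Σ_m h_m t^m = exp(Σ_{m ≥ 1} p_m t^m)`. -/
noncomputable def hcomp {F : Type*} [Field F] (p : ℕ → F) (m : ℕ) : F :=
  ∑ l ∈ Finset.range (m + 1), ((Nat.factorial l : F))⁻¹ * Ppow p l m

lemma atildePow_eq {F : Type*} [Field F] (p : ℕ → F) (r : ℤ → F) :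
    ∀ (m : ℕ) (j k : ℤ), j ≤ k →
      AtildePow p r m j k = Ppow p m (k - j).toNat * ∏ t ∈ Finset.Ioc j k, r t := by
  intro m
  induction m with
  | zero =>
    intro j k hjk
    rcases eq_or_lt_of_le hjk with h | h
    · subst h
      simp [AtildePow, Ppow]
    · have h0 : (k - j).toNat ≠ 0 := by omega
      simp [AtildePow, Ppow, h.ne, h0]
  | succ m ih =>
    intro j k hjk
    show ∑ i ∈ Finset.Icc j k, Atilde p r j i * AtildePow p r m i k = _
    rw [show Ppow p (m+1) (k - j).toNat
        = ∑ i ∈ Finset.range ((k - j).toNat + 1),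
            (if 0 < i then p i else 0) * Ppow p m ((k - j).toNat - i) from rfl,
      Finset.sum_mul]
    refine Finset.sum_nbij' (fun i => (i - j).toNat) (fun n => j + (n : ℤ)) ?_ ?_ ?_ ?_ ?_
    · intro a ha
      simp only [Finset.mem_Icc] at ha
      simp only [Finset.mem_range]
      omega
    · intro n hn
      simp only [Finset.mem_range] at hn
      simp only [Finset.mem_Icc]
      omega
    · intro a ha
      simp only [Finset.mem_Icc] at ha
      omega
    · intro n hn
      simp only [Finset.mem_range] at hn
      omega
    · intro i hi
      simp only [Finset.mem_Icc] at hi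
      rw [ih i k hi.2]
      unfold Atilde
      by_cases h : j < i
      · have h1 : (0 : ℕ) < (i - j).toNat := by omega
        have h2 : (k - j).toNat - (i - j).toNat = (k - i).toNat := by omega
        rw [if_pos h, if_pos h1, h2,
          ← Finset.Ioc_union_Ioc_eq_Ioc hi.1 hi.2,
          Finset.prod_union (by rw [Finset.disjoint_left]; intro a ha hb; simp only [Finset.mem_Ioc] at ha hb; omega)]
        ring
      · have h1 : ¬ (0 : ℕ) < (i - j).toNat := by omega
        rw [if_neg h, if_neg h1]
        ring

/-- For `P = exp(Ã)` with `Ã_{jk} = p_{k-j} r_{j+1} ⋯ r_k` strictly upper triangular: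
the entries of `P` are `P_{jk} = h_{k-j}(p) · r_{j+1} ⋯ r_k` for `k ≥ j`; in
particular, for `j ≥ 0`, the polynomial `p_j(x) = Σ_{k=0}^j P_{kj} x^k` equals
`x^j + Σ_{k=1}^j r_j ⋯ r_{j-k+1} s_{(k)}(p) x^{j-k}` with `s_{(k)}(p) = h_k`. -/
theorem exp_triangular_entries {F : Type*} [Field F] [CharZero F]
    (p : ℕ → F) (r : ℤ → F) :
    (∀ j k : ℤ, j ≤ k →
        Pexp p r j k = hcomp p (k - j).toNat * ∏ t ∈ Finset.Ioc j k, r t) ∧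
    (∀ j : ℕ, ∀ x : F,
        ∑ k ∈ Finset.range (j + 1), Pexp p r (k : ℤ) (j : ℤ) * x ^ k =
          x ^ j + ∑ k ∈ Finset.Icc 1 j,
            (∏ t ∈ Finset.Ioc ((j : ℤ) - (k : ℤ)) (j : ℤ), r t) * hcomp p k *
              x ^ (j - k)) := by

  have main : ∀ j k : ℤ, j ≤ k →
      Pexp p r j k = hcomp p (k - j).toNat * ∏ t ∈ Finset.Ioc j k, r t := by
    intro j k hjk
    unfold Pexp hcomp
    rw [Finset.sum_mul]
    refine Finset.sum_congr rfl fun m hm => ?_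
    rw [atildePow_eq p r m j k hjk]
    ring
  refine ⟨main, fun j x => ?_⟩
  rw [Finset.sum_range_succ, main j j le_rfl]
  have hj0 : ((j : ℤ) - (j : ℤ)).toNat = 0 := by omega
  rw [hj0]
  have hh0 : hcomp p 0 = 1 := by simp [hcomp, Ppow]
  rw [hh0, Finset.Ioc_self, Finset.prod_empty, one_mul, one_mul, add_comm]
  congr 1
  refine Finset.sum_nbij' (fun k => j - k) (fun k => j - k) ?_ ?_ ?_ ?_ ?_
  · intro a ha
    simp only [Finset.mem_range] at ha
    simp only [Finset.mem_Icc]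
    omega
  · intro a ha
    simp only [Finset.mem_Icc] at ha
    simp only [Finset.mem_range]
    omega
  · intro a ha; simp only [Finset.mem_range] at ha; omega
  · intro a ha; simp only [Finset.mem_Icc] at ha; omega
  · intro k hk
    simp only [Finset.mem_range] at hk
    rw [main (k : ℤ) (j : ℤ) (by exact_mod_cast hk.le)]
    have e1 : ((j : ℤ) - (k : ℤ)).toNat = j - k := by omega
    have e2 : (j : ℤ) - ((j - k : ℕ) : ℤ) = (k : ℤ) := by omega
    have e3 : j - (j - k) = k := by omega
    rw [e1, e2, e3]
    ring
end
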